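/- For every integer cap C ≥ 1 and every price floor p with 0 ≤ p ≤ P(C), the safe-price auction M(C) satisfies W(M(C)) ≥ (1A) + (1B). -/

import Mathlib

/-!
Pointwise, the safe-price allocation `m = min(C, d_V(P(C)))` does at least as well as the
integrand of `(1A) + (1B)`. If `d_V(p) < C`, then `θ_V = m` because demand is antitone in the
price and `p ≤ P(C)`. If `d_V(p) ≥ C` but `d = d_V(P(C)) < C`, every marginal value beyond `d`
is below `P(C)`, so `V(C) ≤ V(d) + (C - d) P(C)`, while convexity of `Q` makes the average cost
`Q(n)/n` nondecreasing, so `Q(C) - Q(d) ≥ (C - d) P(C)`; hence `V(C) - Q(C) ≤ V(d) - Q(d)`.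
All integrands are dominated by the integrable `∑_{k ≤ C} |V(k) - Q(k)|`, so the pointwise
bound integrates.
-/

open MeasureTheory ProbabilityTheory

noncomputable section

/-- The marginal value of the `j`-th license under the curve `V`. -/
def marg (V : ℕ → ℝ) (j : ℕ) : ℝ := V j - V (j - 1)

/-- A valuation curve: `V 0 = 0`, nondecreasing, nonincreasing marginal values,
and only finitely many nonzero marginal values. -/
def IsValuation (V : ℕ → ℝ) : Prop :=
  V 0 = 0 ∧ Monotone V ∧ (∀ j : ℕ, 1 ≤ j → marg V (j + 1) ≤ marg V j) ∧
    ∃ N : ℕ, ∀ j : ℕ, N ≤ j → marg V j = 0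

/-- A social cost function: `Q 0 = 0`, nondecreasing, and (discretely) convex. -/
def IsCost (Q : ℕ → ℝ) : Prop :=
  Q 0 = 0 ∧ Monotone Q ∧ ∀ x : ℕ, 1 ≤ x → Q x - Q (x - 1) ≤ Q (x + 1) - Q x

/-- The demand of a valuation curve at price `p`:
`sup { j ≥ 1 : marg V j ≥ p } ∈ ℕ ∪ {∞}` (with `sup ∅ = 0`). -/
def dem (V : ℕ → ℝ) (p : ℝ) : ℕ∞ :=
  sSup {j : ℕ∞ | ∃ k : ℕ, j = (k : ℕ∞) ∧ 1 ≤ k ∧ p ≤ marg V k}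

/-- Number of licenses sold to curve `V` under cap `C` (possibly `∞`) and price floor `p`. -/
def sold (C : ℕ∞) (p : ℝ) (V : ℕ → ℝ) : ℕ := (min C (dem V p)).toNat

/-- The safe price for cap `C`: the average social cost `Q C / C` per license. -/
def safeP (Q : ℕ → ℝ) (C : ℕ) : ℝ := Q C / C

/-- Truth-telling expected welfare of the no-ceiling cap-and-price auction `M(C,p)`
for a distribution `F` over (combined) valuation curves. -/
def Wfl (F : Measure (ℕ → ℝ)) (Q : ℕ → ℝ) (C : ℕ∞) (p : ℝ) : ℝ :=
  ∫ V, (V (sold C p V) - Q (sold C p V)) ∂F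

/-- Number of licenses sold under cap `C`, price floor `p`, and price ceiling `pbar`. -/
def xceil (C : ℕ) (p pbar : ℝ) (V : ℕ → ℝ) : ℕ :=
  if (C : ℕ∞) ≤ dem V pbar then (dem V pbar).toNat else sold (C : ℕ∞) p V

/-- Truth-telling expected welfare of the cap-and-price auction `M(C,p,pbar)`. -/
def Wceil (F : Measure (ℕ → ℝ)) (Q : ℕ → ℝ) (C : ℕ) (p pbar : ℝ) : ℝ :=
  ∫ V, (V (xceil C p pbar V) - Q (xceil C p pbar V)) ∂F

/-- The combined valuation curve of a profile of valuation curves. -/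
def comb {n : ℕ} (Vp : Fin n → ℕ → ℝ) (x : ℕ) : ℝ :=
  sSup {s : ℝ | ∃ y : Fin n → ℕ, (∑ i, y i) = x ∧ s = ∑ i, Vp i (y i)}

open Classical in
/-- Product of a family of probability measures (0 if the family fails to consist
of probability measures). -/
def piProb {ι : Type*} [Fintype ι] {α : ι → Type*} [∀ i, MeasurableSpace (α i)]
    (μ : ∀ i, Measure (α i)) : Measure (∀ i, α i) :=
  if h : ∀ i, IsProbabilityMeasure (μ i) then
    haveI := h
    Measure.pi μ
  else 0

/-- Truth-telling expected welfare of `M(C,p)` for independent firms with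
valuation distributions `F i`, computed via the combined valuation curve. -/
def Wcomb {n : ℕ} (F : Fin n → Measure (ℕ → ℝ)) (Q : ℕ → ℝ) (C : ℕ∞) (p : ℝ) : ℝ :=
  ∫ Vp, (comb Vp (sold C p (comb Vp)) - Q (sold C p (comb Vp))) ∂(piProb F)

/-- Truth-telling expected welfare of `M(C,p,pbar)` for independent firms. -/
def WceilComb {n : ℕ} (F : Fin n → Measure (ℕ → ℝ)) (Q : ℕ → ℝ) (C : ℕ) (p pbar : ℝ) : ℝ :=
  ∫ Vp, (comb Vp (xceil C p pbar (comb Vp)) - Q (xceil C p pbar (comb Vp))) ∂(piProb F)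

/-- `W^{(1)}`: the expected optimal welfare from allocating licenses to a single firm. -/
def W1 {n : ℕ} (F : Fin n → Measure (ℕ → ℝ)) (Q : ℕ → ℝ) : ℝ :=
  ∫ Vp, sSup {w : ℝ | ∃ (i : Fin n) (x : ℕ), w = Vp i x - Q x} ∂(piProb F)

/-- The per-license price in the uniform-price auction with cap `C` and floor `pf`,
given a bid profile `b`. -/
def priceOf {n : ℕ} (C : ℕ) (pf : ℝ) (b : Fin n → ℕ → ℝ) : ℝ :=
  if (∑ i, dem (b i) pf) < (C : ℕ∞) then pf else comb b C - comb b (C - 1)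

/-- A (measurable) tie-breaking allocation rule for the uniform-price auction with
cap `C` and price floor `pf`. -/
def IsAllocRule {n : ℕ} (C : ℕ) (pf : ℝ) (alloc : (Fin n → ℕ → ℝ) → Fin n → ℕ) : Prop :=
  Measurable alloc ∧
    ∀ b : Fin n → ℕ → ℝ, (∀ i, IsValuation (b i)) →
      (((∑ i, dem (b i) pf) < (C : ℕ∞)) → ∀ i, alloc b i = (dem (b i) pf).toNat) ∧
      (((C : ℕ∞) ≤ ∑ i, dem (b i) pf) →
        (∑ i, alloc b i) = C ∧
          ∀ y : Fin n → ℕ, (∑ i, y i) = C → (∑ i, b i (y i)) ≤ ∑ i, b i (alloc b i))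

/-- The strategy `σi` never overbids: with probability one the bid is a valuation
curve pointwise below the true valuation. -/
def NoOverbid (σi : Kernel (ℕ → ℝ) (ℕ → ℝ)) : Prop :=
  ∀ V : ℕ → ℝ, IsValuation V → σi V {B | IsValuation B ∧ ∀ x, B x ≤ V x} = 1

/-- Expected welfare when the firms play the (randomized) strategy profile `σ`. -/
def EqWelfare {n : ℕ} (F : Fin n → Measure (ℕ → ℝ)) (σ : Fin n → Kernel (ℕ → ℝ) (ℕ → ℝ))
    (alloc : (Fin n → ℕ → ℝ) → Fin n → ℕ) (Q : ℕ → ℝ) : ℝ :=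
  ∫ Vp, (∫ b, ((∑ i, Vp i (alloc b i)) - Q (∑ i, alloc b i))
      ∂(piProb fun j => σ j (Vp j))) ∂(piProb F)

/-- Expected utility of firm `i` with valuation `Vi` when every firm plays `σ`. -/
def EUeq {n : ℕ} (F : Fin n → Measure (ℕ → ℝ)) (σ : Fin n → Kernel (ℕ → ℝ) (ℕ → ℝ))
    (alloc : (Fin n → ℕ → ℝ) → Fin n → ℕ) (C : ℕ) (pf : ℝ) (i : Fin n) (Vi : ℕ → ℝ) : ℝ :=
  ∫ Vp, (∫ b, (Vi (alloc b i) - priceOf C pf b * (alloc b i : ℝ))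
      ∂(piProb fun j => σ j (Function.update Vp i Vi j))) ∂(piProb F)

/-- Expected utility of firm `i` with valuation `Vi` deviating to the fixed bid `Bt`
while the others play `σ`. -/
def EUdev {n : ℕ} (F : Fin n → Measure (ℕ → ℝ)) (σ : Fin n → Kernel (ℕ → ℝ) (ℕ → ℝ))
    (alloc : (Fin n → ℕ → ℝ) → Fin n → ℕ) (C : ℕ) (pf : ℝ) (i : Fin n) (Vi Bt : ℕ → ℝ) : ℝ :=
  ∫ Vp, (∫ b, (Vi (alloc b i) - priceOf C pf b * (alloc b i : ℝ))
      ∂(piProb fun j => if j = i then Measure.dirac Bt else σ j (Vp j))) ∂(piProb F)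

/-- Bayes–Nash equilibrium of the uniform-price auction with cap `C` and floor `pf`. -/
def IsBNE {n : ℕ} (F : Fin n → Measure (ℕ → ℝ)) (σ : Fin n → Kernel (ℕ → ℝ) (ℕ → ℝ))
    (alloc : (Fin n → ℕ → ℝ) → Fin n → ℕ) (C : ℕ) (pf : ℝ) : Prop :=
  ∀ (i : Fin n) (Vi : ℕ → ℝ), IsValuation Vi → ∀ Bt : ℕ → ℝ, IsValuation Bt →
    EUdev F σ alloc C pf i Vi Bt ≤ EUeq F σ alloc C pf i Vi

/-- `θ_V = min( d_V(p), d_V(P(C)) )`, as a natural number. -/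
def thetaN (Q : ℕ → ℝ) (C : ℕ) (p : ℝ) (V : ℕ → ℝ) : ℕ :=
  (min (dem V p) (dem V (safeP Q C))).toNat

theorem ENat.measurable_of_forall_measurableSet_lt {α : Type*} [MeasurableSpace α]
    {f : α → ℕ∞} (h : ∀ n : ℕ, MeasurableSet {x | (n : ℕ∞) < f x}) : Measurable f := by
  rw [ENat.measurable_iff]
  rintro (_ | m)
  · convert (h 0).compl using 1
    ext x
    simp [pos_iff_ne_zero]
  · convert (h m).diff (h (m + 1)) using 1
    ext x
    simp only [Set.mem_preimage, Set.mem_singleton_iff, Set.mem_sdiff, Set.mem_ofPred_eq, not_lt,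
      Nat.cast_add, Nat.cast_one]
    rw [← ENat.add_one_le_iff (ENat.natCast_ne_top m), le_antisymm_iff, and_comm]

lemma measurable_marg (k : ℕ) : Measurable fun V : ℕ → ℝ => marg V k :=
  (measurable_pi_apply k).sub (measurable_pi_apply (k - 1))

lemma lt_dem_iff {V : ℕ → ℝ} {r : ℝ} {n : ℕ} :
    (n : ℕ∞) < dem V r ↔ ∃ k, n < k ∧ r ≤ marg V k := by
  rw [dem, lt_sSup_iff]
  constructor
  · rintro ⟨_, ⟨k, rfl, -, hk⟩, hnk⟩
    exact ⟨k, by exact_mod_cast hnk, hk⟩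
  · rintro ⟨k, hnk, hk⟩
    refine ⟨k, ?_, by exact_mod_cast hnk⟩
    exact ⟨k, rfl, by omega, hk⟩

lemma measurable_dem (r : ℝ) : Measurable fun V => dem V r := by
  refine ENat.measurable_of_forall_measurableSet_lt fun n => ?_
  simp_rw [lt_dem_iff, Set.ofPred_exists]
  exact .iUnion fun k => (MeasurableSet.const _).inter
    (measurableSet_le measurable_const (measurable_marg k))

lemma dem_antitone (V : ℕ → ℝ) : Antitone (dem V) := by
  intro r s hrs
  apply sSup_le_sSup
  rintro _ ⟨k, rfl, hk, hsk⟩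
  exact ⟨k, rfl, hk, hrs.trans hsk⟩

lemma marg_lt_of_dem_lt {V : ℕ → ℝ} {r : ℝ} {j : ℕ} (hj : dem V r < j) : marg V j < r := by
  by_contra! h
  have hj1 : 1 ≤ j := Nat.one_le_iff_ne_zero.2 fun h0 => by simp [h0] at hj
  have hle : (j : ℕ∞) ≤ dem V r := le_sSup ⟨j, rfl, hj1, h⟩
  exact hle.not_gt hj

lemma le_add_mul_of_marg_le {V : ℕ → ℝ} {P : ℝ} {d n : ℕ} (hdn : d ≤ n)
    (h : ∀ j, d < j → j ≤ n → marg V j ≤ P) : V n ≤ V d + ((n : ℝ) - d) * P := by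
  induction n, hdn using Nat.le_induction with
  | base => simp
  | succ n hdn ih =>
    have hstep : V (n + 1) - V n ≤ P := by simpa [marg] using h (n + 1) (by omega) le_rfl
    have := ih fun j hj hjn => h j hj (by omega)
    push_cast
    linarith

lemma sold_le (C : ℕ) (p : ℝ) (V : ℕ → ℝ) : sold C p V ≤ C :=
  ENat.toNat_le_of_le_natCast (min_le_left _ _)

lemma measurable_sold (C : ℕ∞) (p : ℝ) : Measurable (sold C p) :=
  (Measurable.of_discrete (f := fun x : ℕ∞ × ℕ∞ => (min x.1 x.2).toNat)).comp
    (measurable_const.prodMk (measurable_dem p))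

lemma measurable_thetaN (Q : ℕ → ℝ) (C : ℕ) (p : ℝ) : Measurable (thetaN Q C p) :=
  (Measurable.of_discrete (f := fun x : ℕ∞ × ℕ∞ => (min x.1 x.2).toNat)).comp
    ((measurable_dem p).prodMk (measurable_dem _))

namespace IsCost

variable {Q : ℕ → ℝ} (hQ : IsCost Q)
include hQ

lemma le_mul_sub (n : ℕ) : Q n ≤ n * (Q (n + 1) - Q n) := by
  induction n with
  | zero => simp [hQ.1]
  | succ n ih =>
    have hconv := hQ.2.2 (n + 1) (by omega)
    simp only [Nat.add_sub_cancel] at hconv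
    push_cast
    nlinarith

lemma monotone_div : Monotone fun n : ℕ => Q n / n := by
  refine monotone_nat_of_le_succ fun n => ?_
  rcases Nat.eq_zero_or_pos n with rfl | hn
  · simpa [hQ.1] using hQ.2.1 (Nat.zero_le 1)
  · have := hQ.le_mul_sub n
    rw [div_le_div_iff₀ (by positivity) (by positivity)]
    push_cast
    linarith

lemma le_mul_safeP {d C : ℕ} (hdC : d ≤ C) : Q d ≤ d * safeP Q C := by
  rcases Nat.eq_zero_or_pos d with rfl | hd
  · simp [hQ.1]
  · calc Q d = d * (Q d / d) := by field_simp
      _ ≤ d * safeP Q C := by gcongr; exact hQ.monotone_div hdC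

end IsCost

lemma apply_sub_le_sold_safeP {Q : ℕ → ℝ} (hQ : IsCost Q) (V : ℕ → ℝ) (C : ℕ) :
    V C - Q C ≤ V (sold C (safeP Q C) V) - Q (sold C (safeP Q C) V) := by
  set P := safeP Q C
  rcases le_or_gt (C : ℕ∞) (dem V P) with hC | hC
  · simp [sold, min_eq_left hC]
  obtain ⟨d, hd⟩ := ENat.ne_top_iff_exists.mp hC.ne_top
  have hdC : d < C := by rw [← hd] at hC; exact_mod_cast hC
  have hsold : sold C P V = d := by rw [sold, min_eq_right hC.le, ← hd, ENat.toNat_natCast]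
  rw [hsold]
  have hV : V C ≤ V d + ((C : ℝ) - d) * P :=
    le_add_mul_of_marg_le hdC.le fun j hj _ =>
      (marg_lt_of_dem_lt (by rw [← hd]; exact_mod_cast hj)).le
  have hQd : Q d ≤ d * P := hQ.le_mul_safeP hdC.le
  have hQC : C * P = Q C := by
    have : (C : ℝ) ≠ 0 := Nat.cast_ne_zero.2 (by omega)
    simp only [P, safeP]
    field_simp
  linarith

lemma thetaN_eq_sold {Q : ℕ → ℝ} {C : ℕ} {p : ℝ} {V : ℕ → ℝ} (hple : p ≤ safeP Q C)
    (h : dem V p < C) : thetaN Q C p V = sold C (safeP Q C) V := by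
  have hdem : dem V (safeP Q C) ≤ dem V p := dem_antitone V hple
  rw [thetaN, sold, min_eq_right hdem, min_eq_right (hdem.trans h.le)]

section Integrability

variable {μ : Measure (ℕ → ℝ)} [IsFiniteMeasure μ]
  (hint : ∀ x : ℕ, Integrable (fun V : ℕ → ℝ => V x) μ) (Q : ℕ → ℝ)
include hint

lemma integrable_apply_sub {g : (ℕ → ℝ) → ℕ} (hg : Measurable g) {C : ℕ}
    (hgC : ∀ᵐ V ∂μ, g V ≤ C) : Integrable (fun V => V (g V) - Q (g V)) μ := by
  have hmeas : Measurable fun V : ℕ → ℝ => V (g V) :=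
    (measurable_from_prod_countable_left (f := fun q : (ℕ → ℝ) × ℕ => q.1 q.2)
      fun k => measurable_pi_apply k).comp
      (measurable_id.prodMk hg)
  refine .mono' (integrable_finsetSum (Finset.range (C + 1)) fun k _ =>
      ((hint k).sub (integrable_const (Q k))).abs)
    (hmeas.sub (Measurable.of_discrete.comp hg)).aestronglyMeasurable ?_
  filter_upwards [hgC] with V hV
  exact Finset.single_le_sum (f := fun k => |V k - Q k|) (fun k _ => abs_nonneg _)
    (Finset.mem_range.2 (Nat.lt_succ_of_le hV))

lemma integrable_ite_apply_sub {c : (ℕ → ℝ) → Prop} [DecidablePred c]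
    (hc : MeasurableSet {V | c V}) {g : (ℕ → ℝ) → ℕ} (hg : Measurable g) {C : ℕ}
    (hgC : ∀ V, c V → g V ≤ C) :
    Integrable (fun V => if c V then V (g V) - Q (g V) else 0) μ := by
  refine (IntegrableOn.integrable_indicator (integrable_apply_sub (fun x => (hint x).restrict) Q hg
    (ae_restrict_of_forall_mem hc hgC)) hc).congr (.of_forall fun V => ?_)
  simp [Set.indicator_apply]

end Integrability

theorem stmt7_general (F : Measure (ℕ → ℝ)) (hprob : IsProbabilityMeasure F)
    (hint : ∀ x : ℕ, Integrable (fun V : ℕ → ℝ => V x) F)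
    (Q : ℕ → ℝ) (hQ : IsCost Q)
    (C : ℕ) (p : ℝ) (hple : p ≤ safeP Q C) :
    (∫ V, (if (C : ℕ∞) ≤ dem V p then V C - Q C else 0) ∂F) +
      (∫ V, (if dem V p < (C : ℕ∞) then
          V (thetaN Q C p V) - Q (thetaN Q C p V) else 0) ∂F)
      ≤ Wfl F Q (C : ℕ∞) (safeP Q C) := by
  have hcap : MeasurableSet {V | (C : ℕ∞) ≤ dem V p} :=
    measurable_dem p (MeasurableSet.of_discrete : MeasurableSet (Set.Ici (C : ℕ∞)))
  have h1A := integrable_ite_apply_sub hint Q hcap (g := fun _ => C) measurable_const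
    fun _ _ => le_rfl
  have h1B := integrable_ite_apply_sub hint Q (c := fun V => dem V p < C)
    (by simpa only [Set.compl_ofPred, not_le] using hcap.compl)
    (measurable_thetaN Q C p) fun V hV =>
      thetaN_eq_sold hple hV ▸ sold_le C _ V
  have hW := integrable_apply_sub hint Q (measurable_sold C (safeP Q C))
    (ae_of_all _ (sold_le C _))
  rw [← integral_add h1A h1B]
  refine integral_mono (h1A.add h1B) hW fun V => ?_
  rcases le_or_gt (C : ℕ∞) (dem V p) with hV | hV
  · rw [if_pos hV, if_neg hV.not_gt, add_zero]
    exact apply_sub_le_sold_safeP hQ V C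
  · rw [if_neg hV.not_ge, if_pos hV, zero_add, thetaN_eq_sold hple hV]

/-- for a price floor `p ≤ P(C)`, the safe-price auction `M(C)`
satisfies `W(M(C)) ≥ (1A) + (1B)`. -/
theorem stmt7 (F : Measure (ℕ → ℝ)) (hprob : IsProbabilityMeasure F)
    (hval : F {V | IsValuation V} = 1)
    (hint : ∀ x : ℕ, Integrable (fun V : ℕ → ℝ => V x) F)
    (Q : ℕ → ℝ) (hQ : IsCost Q)
    (C : ℕ) (hC : 1 ≤ C) (p : ℝ) (hp : 0 ≤ p) (hple : p ≤ safeP Q C) :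
    (∫ V, (if (C : ℕ∞) ≤ dem V p then V C - Q C else 0) ∂F) +
      (∫ V, (if dem V p < (C : ℕ∞) then
          V (thetaN Q C p V) - Q (thetaN Q C p V) else 0) ∂F)
      ≤ Wfl F Q (C : ℕ∞) (safeP Q C) :=
  stmt7_general F hprob hint Q hQ C p hple

end
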